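/- Let $T \geq 1$, let $K_1, \ldots, K_T$ be $H \times H$ real positive semidefinite matrices such that $\bar{K} := \sum_{t=1}^T K_t$ is positive definite, let $\beta, \gamma > 0$, and set $D = H$. Then the minimum of $\gamma \sum_{t=1}^T \mathrm{tr}(M_t) + \beta \|L\|_F^2$ over all real $H \times D$ matrices $L$ and $D \times D$ real positive semidefinite matrices $M_1, \ldots, M_T$ subject to the constraints $L M_t L^{\top} = K_t$ for all $t = 1, \ldots, T$ equals $2\sqrt{\beta\gamma}\,\mathrm{tr}(\bar{K}^{1/2})$, and this minimum is attained. -/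

import Mathlib

open Matrix

/-- The (unique) positive semidefinite square root of a real positive semidefinite
matrix (junk value `0` if the matrix is not positive semidefinite). -/
noncomputable def psdSqrt {n : ℕ} (A : Matrix (Fin n) (Fin n) ℝ) : Matrix (Fin n) (Fin n) ℝ :=
  letI := Classical.propDecidable A.PosSemidef
  if h : A.PosSemidef then
    h.1.eigenvectorUnitary.1 * diagonal ((↑) ∘ (√·) ∘ h.1.eigenvalues) *
      (star h.1.eigenvectorUnitary : Matrix (Fin n) (Fin n) ℝ)
  else 0


/-- Square root of a positive semidefinite matrix (same value as `psdSqrt`). -/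
noncomputable def Matrix.PosSemidef.sqrt {n : ℕ} {A : Matrix (Fin n) (Fin n) ℝ}
    (h : A.PosSemidef) : Matrix (Fin n) (Fin n) ℝ :=
  h.1.eigenvectorUnitary.1 * diagonal ((↑) ∘ (√·) ∘ h.1.eigenvalues) *
    (star h.1.eigenvectorUnitary : Matrix (Fin n) (Fin n) ℝ)

open scoped MatrixOrder in
lemma Matrix.PosSemidef.sqrt_eq_cfc {n : ℕ} {A : Matrix (Fin n) (Fin n) ℝ}
    (h : A.PosSemidef) : h.sqrt = CFC.sqrt A := by
  rw [CFC.sqrt_eq_real_sqrt A h.nonneg, cfcₙ_eq_cfc, h.1.cfc_eq, IsHermitian.cfc,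
    Unitary.conjStarAlgAut_apply]
  rfl

open scoped MatrixOrder in
lemma Matrix.PosSemidef.posSemidef_sqrt {n : ℕ} {A : Matrix (Fin n) (Fin n) ℝ}
    (h : A.PosSemidef) : h.sqrt.PosSemidef := by
  rw [h.sqrt_eq_cfc]
  exact (CFC.sqrt_nonneg A).posSemidef

open scoped MatrixOrder in
lemma Matrix.PosSemidef.sqrt_mul_self {n : ℕ} {A : Matrix (Fin n) (Fin n) ℝ}
    (h : A.PosSemidef) : h.sqrt * h.sqrt = A := by
  rw [h.sqrt_eq_cfc]
  exact CFC.sqrt_mul_sqrt_self A h.nonneg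

lemma psd_smul' {n : ℕ} {A : Matrix (Fin n) (Fin n) ℝ} (h : A.PosSemidef) {c : ℝ}
    (hc : 0 ≤ c) : (c • A).PosSemidef := by
  refine ⟨?_, fun x => ?_⟩
  · have ht : Aᵀ = A := h.1.eq
    unfold Matrix.IsHermitian
    rw [conjTranspose_smul]
    simp [ht]
  · exact (h.smul hc).2 x

lemma psd_trace_nonneg' {n : ℕ} {A : Matrix (Fin n) (Fin n) ℝ} (h : A.PosSemidef) :
    0 ≤ A.trace := by
  apply Finset.sum_nonneg
  intro i _
  have := h.dotProduct_mulVec_nonneg (Pi.single i 1)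
  simpa [dotProduct, Matrix.mulVec_single, Pi.single_apply] using this

lemma psd_sum' {n T : ℕ} {M : Fin T → Matrix (Fin n) (Fin n) ℝ}
    (h : ∀ t, (M t).PosSemidef) : (∑ t, M t).PosSemidef :=
  Finset.sum_induction M Matrix.PosSemidef (fun _ _ ha hb => ha.add hb)
    Matrix.PosSemidef.zero (fun t _ => h t)

lemma trace_mul_transpose_sum' {n : ℕ} (A B : Matrix (Fin n) (Fin n) ℝ) :
    (A * Bᵀ).trace = ∑ p : Fin n × Fin n, A p.1 p.2 * B p.1 p.2 := by
  rw [Fintype.sum_prod_type]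
  simp [Matrix.trace, Matrix.diag, Matrix.mul_apply, Matrix.transpose_apply]

lemma trace_CS' {n : ℕ} (X L : Matrix (Fin n) (Fin n) ℝ) :
    ((X * Lᵀ).trace) ^ 2 ≤ (X * Xᵀ).trace * (L * Lᵀ).trace := by
  rw [trace_mul_transpose_sum', trace_mul_transpose_sum', trace_mul_transpose_sum']
  have := Finset.univ.sum_mul_sq_le_sq_mul_sq (fun p : Fin n × Fin n => X p.1 p.2)
    (fun p => L p.1 p.2)
  simpa [pow_two] using this

/-- Proposition 1 (full form): the minimum of `γ ∑ t tr(M t) + β ‖L‖_F²` over all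
factorizations `K t = L * M t * Lᵀ` with `M t` positive semidefinite equals
`2 √(βγ) tr((∑ t, K t)^{1/2})`, and the minimum is attained. -/
theorem stmt_2 {H T : ℕ} (hT : 1 ≤ T)
    (K : Fin T → Matrix (Fin H) (Fin H) ℝ)
    (hK : ∀ t, (K t).PosSemidef)
    (hKbar : (∑ t, K t).PosDef)
    (β γ : ℝ) (hβ : 0 < β) (hγ : 0 < γ) :
    IsLeast { v : ℝ | ∃ (L : Matrix (Fin H) (Fin H) ℝ)
        (M : Fin T → Matrix (Fin H) (Fin H) ℝ),
        (∀ t, (M t).PosSemidef) ∧ (∀ t, L * M t * Lᵀ = K t) ∧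
        v = γ * ∑ t, (M t).trace + β * (L * Lᵀ).trace }
      (2 * Real.sqrt (β * γ) * (psdSqrt (∑ t, K t)).trace) := by
  have hKbpsd : (∑ t, K t).PosSemidef := hKbar.posSemidef
  have hSdef : psdSqrt (∑ t, K t) = hKbpsd.sqrt := by
    rw [psdSqrt]
    exact dif_pos hKbpsd
  set S := hKbpsd.sqrt with hSd
  have hSpsd : S.PosSemidef := hKbpsd.posSemidef_sqrt
  have hSS : S * S = ∑ t, K t := hKbpsd.sqrt_mul_self
  clear_value S
  have hSt : Sᵀ = S := hSpsd.isHermitian.eq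
  have hSdet : S.det ≠ 0 := by
    intro h
    have : S.det * S.det = (∑ t, K t).det := by rw [← det_mul, hSS]
    rw [h, mul_zero] at this
    exact absurd this.symm (ne_of_gt hKbar.det_pos)
  have hSinv : S * S⁻¹ = 1 := Matrix.mul_nonsing_inv S (isUnit_iff_ne_zero.mpr hSdet)
  have hSinv' : S⁻¹ * S = 1 := Matrix.nonsing_inv_mul S (isUnit_iff_ne_zero.mpr hSdet)
  have hSit : (S⁻¹)ᵀ = S⁻¹ := by rw [Matrix.transpose_nonsing_inv, hSt]
  rw [hSdef]
  constructor
  · -- membership: exhibit the minimizer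
    obtain ⟨Q, hQpsd, hQQ⟩ : ∃ Q : Matrix (Fin H) (Fin H) ℝ, Q.PosSemidef ∧ Q * Q = S :=
      ⟨hSpsd.sqrt, hSpsd.posSemidef_sqrt, hSpsd.sqrt_mul_self⟩
    have hQt : Qᵀ = Q := hQpsd.isHermitian.eq
    have hQdet : Q.det ≠ 0 := by
      intro h
      have : Q.det * Q.det = S.det := by rw [← det_mul, hQQ]
      rw [h, mul_zero] at this
      exact hSdet this.symm
    have hQinv : Q * Q⁻¹ = 1 := Matrix.mul_nonsing_inv Q (isUnit_iff_ne_zero.mpr hQdet)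
    have hQinv' : Q⁻¹ * Q = 1 := Matrix.nonsing_inv_mul Q (isUnit_iff_ne_zero.mpr hQdet)
    have hQit : (Q⁻¹)ᵀ = Q⁻¹ := by rw [Matrix.transpose_nonsing_inv, hQt]
    set a := Real.sqrt (γ / β) with had
    have ha : 0 < a := Real.sqrt_pos.mpr (div_pos hγ hβ)
    have ha2 : a * a = γ / β := Real.mul_self_sqrt (div_pos hγ hβ).le
    refine ⟨Real.sqrt a • Q, fun t => a⁻¹ • (Q⁻¹ * K t * Q⁻¹), fun t => ?_, fun t => ?_, ?_⟩
    · exact psd_smul' (by simpa [hQit] using (hK t).mul_mul_conjTranspose_same Q⁻¹)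
        (inv_nonneg.mpr ha.le)
    · have hc2 : Real.sqrt a * Real.sqrt a = a := Real.mul_self_sqrt ha.le
      rw [transpose_smul, hQt]
      have hassoc : Real.sqrt a • Q * (a⁻¹ • (Q⁻¹ * K t * Q⁻¹)) * (Real.sqrt a • Q)
          = (Real.sqrt a * a⁻¹ * Real.sqrt a) • ((Q * Q⁻¹) * K t * (Q⁻¹ * Q)) := by
        simp only [Matrix.smul_mul, Matrix.mul_smul, smul_smul]
        congr 1
        · ring
        · noncomm_ring
      rw [hassoc, hQinv, hQinv', one_mul, mul_one]
      have h9 : Real.sqrt a * a⁻¹ * Real.sqrt a = 1 := by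
        have h8 : Real.sqrt a * a⁻¹ * Real.sqrt a
            = a⁻¹ * (Real.sqrt a * Real.sqrt a) := by ring
        rw [h8, hc2, inv_mul_cancel₀ (ne_of_gt ha)]
      rw [h9, one_smul]
    · -- value computation
      have htrM : ∑ t, (a⁻¹ • (Q⁻¹ * K t * Q⁻¹)).trace = a⁻¹ * S.trace := by
        have h1 : ∀ t, (a⁻¹ • (Q⁻¹ * K t * Q⁻¹)).trace = a⁻¹ * (Q⁻¹ * K t * Q⁻¹).trace := by
          intro t; rw [trace_smul]; simp
        simp_rw [h1, ← Finset.mul_sum]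
        congr 1
        have h2 : ∑ t, (Q⁻¹ * K t * Q⁻¹).trace = (Q⁻¹ * (∑ t, K t) * Q⁻¹).trace := by
          rw [Finset.mul_sum, Finset.sum_mul, trace_sum]
        rw [h2, ← hSS, Matrix.trace_mul_cycle]
        have h3 : Q⁻¹ * Q⁻¹ * (S * S) = S := by
          have : Q⁻¹ * Q⁻¹ = S⁻¹ := by rw [← Matrix.mul_inv_rev, hQQ]
          rw [this, ← Matrix.mul_assoc, hSinv', one_mul]
        rw [h3]
      have htrL : ((Real.sqrt a • Q) * (Real.sqrt a • Q)ᵀ).trace = a * S.trace := by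
        rw [transpose_smul, hQt, Matrix.smul_mul, Matrix.mul_smul, smul_smul,
          Real.mul_self_sqrt ha.le, hQQ, trace_smul]
        simp
      rw [htrM, htrL]
      have hγa : γ * a⁻¹ = β * a := by
        have hγeq : γ = β * (a * a) := by rw [ha2]; field_simp
        rw [hγeq]; field_simp
      have hβa : β * a = Real.sqrt (β * γ) := by
        have hba : β * a * (β * a) = β * γ := by
          have : β * a * (β * a) = β * β * (a * a) := by ring
          rw [this, ha2]; field_simp
        rw [← hba, Real.sqrt_mul_self (by positivity)]
      have hsplit : γ * (a⁻¹ * S.trace) + β * (a * S.trace)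
          = (γ * a⁻¹ + β * a) * S.trace := by ring
      rw [hsplit, hγa, hβa]
      ring
  · -- lower bound
    rintro v ⟨L, M, hMpsd, hfact, rfl⟩
    set N := ∑ t, M t with hNd
    have hNpsd : N.PosSemidef := psd_sum' hMpsd
    have hLN : L * N * Lᵀ = ∑ t, K t := by
      rw [hNd, Finset.mul_sum, Finset.sum_mul]
      exact Finset.sum_congr rfl fun t _ => hfact t
    obtain ⟨P, hPpsd, hPP⟩ : ∃ P : Matrix (Fin H) (Fin H) ℝ, P.PosSemidef ∧ P * P = N :=
      ⟨hNpsd.sqrt, hNpsd.posSemidef_sqrt, hNpsd.sqrt_mul_self⟩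
    have hPt : Pᵀ = P := hPpsd.isHermitian.eq
    set A := L * P with hAd
    set X := S⁻¹ * A with hXd
    have hAAt : A * Aᵀ = S * S := by
      have h1 : A * Aᵀ = L * (P * P) * Lᵀ := by
        rw [hAd, transpose_mul, hPt]; noncomm_ring
      rw [h1, hPP, hLN, hSS]
    have hXXt : X * Xᵀ = 1 := by
      rw [hXd, transpose_mul, hSit]
      have h1 : S⁻¹ * A * (Aᵀ * S⁻¹) = S⁻¹ * (A * Aᵀ) * S⁻¹ := by noncomm_ring
      rw [h1, hAAt]
      have h2 : S⁻¹ * (S * S) * S⁻¹ = (S⁻¹ * S) * (S * S⁻¹) := by noncomm_ring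
      rw [h2, hSinv', hSinv, one_mul]
    have hXtX : Xᵀ * X = 1 := mul_eq_one_comm.mp hXXt
    have htr : S.trace = ((X * P) * Lᵀ).trace := by
      have h1 : (X * P) * Lᵀ = S := by
        have h2 : (X * P) * Lᵀ = S⁻¹ * (L * (P * P) * Lᵀ) := by
          rw [hXd, hAd]; noncomm_ring
        rw [h2, hPP, hLN, ← hSS, ← Matrix.mul_assoc, hSinv', one_mul]
      rw [h1]
    have hXP : ((X * P) * (X * P)ᵀ).trace = N.trace := by
      have h1 : (X * P) * (X * P)ᵀ = X * N * Xᵀ := by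
        rw [transpose_mul, hPt, ← hPP]; noncomm_ring
      rw [h1]
      have h2 := Matrix.trace_mul_cycle X N Xᵀ
      rw [h2, hXtX, one_mul]
    have key : S.trace ^ 2 ≤ N.trace * (L * Lᵀ).trace := by
      have hcs := trace_CS' (X * P) L
      rwa [← htr, hXP] at hcs
    have hs : 0 ≤ S.trace := psd_trace_nonneg' hSpsd
    have hx : 0 ≤ N.trace := psd_trace_nonneg' hNpsd
    have hy : 0 ≤ (L * Lᵀ).trace := by
      rw [trace_mul_transpose_sum']
      exact Finset.sum_nonneg fun p _ => mul_self_nonneg _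
    have h1 : S.trace ≤ Real.sqrt (N.trace * (L * Lᵀ).trace) := by
      rw [← Real.sqrt_sq hs]
      exact Real.sqrt_le_sqrt key
    have h2 : 2 * Real.sqrt (β * γ) * Real.sqrt (N.trace * (L * Lᵀ).trace)
        ≤ γ * N.trace + β * (L * Lᵀ).trace := by
      have e1 : Real.sqrt (β * γ) * Real.sqrt (N.trace * (L * Lᵀ).trace)
          = Real.sqrt (γ * N.trace) * Real.sqrt (β * (L * Lᵀ).trace) := by
        rw [← Real.sqrt_mul (by positivity : (0:ℝ) ≤ β * γ),
          ← Real.sqrt_mul (mul_nonneg hγ.le hx)]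
        congr 1
        ring
      have e2 := two_mul_le_add_sq (Real.sqrt (γ * N.trace)) (Real.sqrt (β * (L * Lᵀ).trace))
      rw [Real.sq_sqrt (mul_nonneg hγ.le hx), Real.sq_sqrt (mul_nonneg hβ.le hy)] at e2
      calc 2 * Real.sqrt (β * γ) * Real.sqrt (N.trace * (L * Lᵀ).trace)
          = 2 * (Real.sqrt (γ * N.trace) * Real.sqrt (β * (L * Lᵀ).trace)) := by rw [mul_assoc, e1]
        _ ≤ γ * N.trace + β * (L * Lᵀ).trace := by linarith
    calc 2 * Real.sqrt (β * γ) * S.trace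
        ≤ 2 * Real.sqrt (β * γ) * Real.sqrt (N.trace * (L * Lᵀ).trace) := by
          apply mul_le_mul_of_nonneg_left h1 (by positivity)
      _ ≤ γ * N.trace + β * (L * Lᵀ).trace := h2
      _ = γ * ∑ t, (M t).trace + β * (L * Lᵀ).trace := by rw [hNd, trace_sum]
    -- goal shape: compare with the set's value expression
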